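/- arXiv:2010.03698 — 2 statements merged into one kernel-verified Lean document; each statement's English description precedes it below -/
import Mathlib

section
/- Let ξ > 0 be real, N ≥ 2 an integer, b ≥ 0 an integer, and define f_{d,l} = exp((2b+1)(d²+d)ξ/(2N)) · 2·sinh((2d+1)ξ/(2N)) · ∏_{k=1}^{l} 4·sinh((2d+1+k)ξ/(2N))·sinh((2d+1−k)ξ/(2N)). Then for all integers d, l with 1 ≤ d ≤ N−1 and 0 ≤ l ≤ 2d−2, one has f_{d,l} > f_{d−1,l}. -/
/-! Every factor of `f` has the form `exp (β (s² + s) c)` or `sinh ((2s + 1 ± k) c)` with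
`c = ξ / 2N > 0`, and is positive and strictly increasing in `s` as long as `k < 2s + 1`;
the bound `l ≤ 2d - 2` guarantees this for `s = d - 1`. -/

noncomputable def arcosh (x : ℝ) : ℝ := Real.log (x + Real.sqrt (x^2 - 1))

noncomputable def kappa : ℝ := arcosh (3/2) / 2

noncomputable def f (ξ : ℝ) (b N d l : ℕ) : ℝ :=
  Real.exp ((2*(b:ℝ)+1) * ((d:ℝ)^2 + (d:ℝ)) * ξ / (2*(N:ℝ))) *
    (2 * Real.sinh ((2*(d:ℝ)+1) * ξ / (2*(N:ℝ)))) *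
  ∏ k ∈ Finset.Icc 1 l,
    (4 * Real.sinh ((2*(d:ℝ)+1+(k:ℝ)) * ξ / (2*(N:ℝ))) *
       Real.sinh ((2*(d:ℝ)+1-(k:ℝ)) * ξ / (2*(N:ℝ))))

open Real Finset

section ScaledFactors

variable {ξ M : ℝ} (h : 0 < ξ / M)
include h

lemma sinh_mul_div_strictMono : StrictMono fun x : ℝ => sinh (x * ξ / M) := by
  intro x y hxy
  simp only [mul_div_assoc]
  exact sinh_strictMono (mul_lt_mul_of_pos_right hxy h)

lemma sinh_mul_div_pos {x : ℝ} (hx : 0 < x) : 0 < sinh (x * ξ / M) := by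
  rw [mul_div_assoc]
  exact sinh_pos_iff.mpr (mul_pos hx h)

lemma exp_mul_div_lt_of_lt {β s t : ℝ} (hβ : 0 < β) (hs : 0 ≤ s) (hst : s < t) :
    exp (β * (s ^ 2 + s) * ξ / M) < exp (β * (t ^ 2 + t) * ξ / M) := by
  simp only [mul_div_assoc]
  gcongr

lemma sinh_pair_pos {s k : ℝ} (hk : 0 ≤ k) (hks : k < 2 * s + 1) :
    0 < 4 * sinh ((2 * s + 1 + k) * ξ / M) * sinh ((2 * s + 1 - k) * ξ / M) := by
  have hplus := sinh_mul_div_pos h (show 0 < 2 * s + 1 + k by linarith)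
  have hminus := sinh_mul_div_pos h (show 0 < 2 * s + 1 - k by linarith)
  positivity

lemma sinh_pair_lt_of_lt {s t k : ℝ} (hk : 0 ≤ k) (hks : k < 2 * s + 1) (hst : s < t) :
    4 * sinh ((2 * s + 1 + k) * ξ / M) * sinh ((2 * s + 1 - k) * ξ / M) <
      4 * sinh ((2 * t + 1 + k) * ξ / M) * sinh ((2 * t + 1 - k) * ξ / M) := by
  have hplus := sinh_mul_div_pos h (show 0 < 2 * s + 1 + k by linarith)
  have hminus := sinh_mul_div_pos h (show 0 < 2 * s + 1 - k by linarith)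
  have ltplus := sinh_mul_div_strictMono h (show 2 * s + 1 + k < 2 * t + 1 + k by linarith)
  have ltminus := sinh_mul_div_strictMono h (show 2 * s + 1 - k < 2 * t + 1 - k by linarith)
  simp only at ltplus ltminus
  exact mul_lt_mul'' (by linarith) ltminus (by linarith) hminus.le

end ScaledFactors

theorem stmt1_general (ξ : ℝ) (hξ : 0 < ξ) (N b : ℕ) (hN : 2 ≤ N) (d l : ℕ)
    (hd1 : 1 ≤ d) (hl : l ≤ 2*d - 2) :
    f ξ b N (d-1) l < f ξ b N d l := by
  have hc : 0 < ξ / (2 * (N : ℝ)) := by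
    have : (0 : ℝ) < N := by exact_mod_cast (show 0 < N by omega)
    positivity
  have hd : (1 : ℝ) ≤ d := by exact_mod_cast hd1
  have hrange : ∀ k ∈ Icc 1 l, (0 : ℝ) ≤ k ∧ (k : ℝ) < 2 * ((d : ℝ) - 1) + 1 := fun k hk => by
    have : k + 2 ≤ 2 * d := by have := (mem_Icc.mp hk).2; omega
    have : (k : ℝ) + 2 ≤ 2 * d := by exact_mod_cast this
    exact ⟨k.cast_nonneg, by linarith⟩
  have hsinh := sinh_mul_div_pos hc (show 0 < 2 * (d : ℝ) + 1 by linarith)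
  have hsinh' := sinh_mul_div_pos hc (show 0 < 2 * ((d : ℝ) - 1) + 1 by linarith)
  unfold f
  rw [Nat.cast_sub hd1, Nat.cast_one]
  refine mul_lt_mul (mul_lt_mul'' ?_ ?_ (exp_pos _).le (by positivity))
    (prod_le_prod (fun k hk => (sinh_pair_pos hc (hrange k hk).1 (hrange k hk).2).le)
      (fun k hk => (sinh_pair_lt_of_lt hc (hrange k hk).1 (hrange k hk).2 (by linarith)).le))
    (prod_pos fun k hk => sinh_pair_pos hc (hrange k hk).1 (hrange k hk).2) (by positivity)
  · exact exp_mul_div_lt_of_lt hc (by positivity) (by linarith) (by linarith)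
  · have := sinh_mul_div_strictMono hc (show 2 * ((d : ℝ) - 1) + 1 < 2 * d + 1 by linarith)
    simp only at this
    linarith

theorem stmt1 (ξ : ℝ) (hξ : 0 < ξ) (N b : ℕ) (hN : 2 ≤ N) (d l : ℕ)
    (hd1 : 1 ≤ d) (hd2 : d ≤ N - 1) (hl : l ≤ 2*d - 2) :
    f ξ b N (d-1) l < f ξ b N d l :=
  stmt1_general ξ hξ N b hN d l hd1 hl
end

section
/- Let ξ > 0 be real, N ≥ 2, b ≥ 0 integers, and f_{d,l} as above. Then f_{N−1,l}/f_{N−2,l} > e^{ξ/2} for every l with 0 ≤ l ≤ 2(N−2)−2 ≤ 2N−2 where both terms are defined. In particular f_{N−1,l} > e^{ξ/2}·f_{N−2,l}. -/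
/-! Passing from `d` to `d + 1` multiplies the exponential factor of `f` by
`exp ((2b+1)(d+1)ξ/N)`, which is at least `exp (ξ/2)` when `d = N - 2`, and increases every
`sinh` factor. As long as `l ≤ 2d` all arguments `(2d+1-k)ξ/(2N)`, `k ≤ l`, are positive, so
every factor is positive and the comparisons multiply. -/

open Real Finset

section

variable {ξ : ℝ} {N : ℕ}

lemma sinh_scaled_pos (hξ : 0 < ξ) (hN : 0 < N) {a : ℝ} (ha : 0 < a) :
    0 < sinh (a * ξ / (2 * N)) :=
  sinh_pos_iff.mpr (by positivity)

lemma sinh_scaled_lt_sinh_scaled (hξ : 0 < ξ) (hN : 0 < N) {a a' : ℝ} (h : a < a') :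
    sinh (a * ξ / (2 * N)) < sinh (a' * ξ / (2 * N)) :=
  sinh_lt_sinh.mpr (by gcongr)

lemma f_factor_pos (hξ : 0 < ξ) (hN : 0 < N) {d k : ℕ} (hk : k ≤ 2 * d) :
    0 < 4 * sinh ((2 * (d : ℝ) + 1 + k) * ξ / (2 * N)) *
      sinh ((2 * (d : ℝ) + 1 - k) * ξ / (2 * N)) := by
  have hk' : (k : ℝ) ≤ 2 * d := by exact_mod_cast hk
  have hplus := sinh_scaled_pos hξ hN (a := 2 * d + 1 + k) (by positivity)
  have hminus := sinh_scaled_pos hξ hN (a := 2 * d + 1 - k) (by linarith)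
  positivity

lemma prod_f_factor_pos (hξ : 0 < ξ) (hN : 0 < N) {d l : ℕ} (hl : l ≤ 2 * d) :
    0 < ∏ k ∈ Icc 1 l, 4 * sinh ((2 * (d : ℝ) + 1 + k) * ξ / (2 * N)) *
      sinh ((2 * (d : ℝ) + 1 - k) * ξ / (2 * N)) :=
  prod_pos fun _ hk => f_factor_pos hξ hN ((mem_Icc.mp hk).2.trans hl)

lemma f_pos (hξ : 0 < ξ) (hN : 0 < N) (b : ℕ) {d l : ℕ} (hl : l ≤ 2 * d) :
    0 < f ξ b N d l := by
  have hsinh := sinh_scaled_pos hξ hN (a := 2 * d + 1) (by positivity)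
  have hprod := prod_f_factor_pos hξ hN hl
  unfold f
  positivity

lemma f_factor_le_f_factor_succ (hξ : 0 < ξ) (hN : 0 < N) {d k : ℕ} (hk : k ≤ 2 * d) :
    4 * sinh ((2 * (d : ℝ) + 1 + k) * ξ / (2 * N)) *
        sinh ((2 * (d : ℝ) + 1 - k) * ξ / (2 * N)) ≤
      4 * sinh ((2 * ((d + 1 : ℕ) : ℝ) + 1 + k) * ξ / (2 * N)) *
        sinh ((2 * ((d + 1 : ℕ) : ℝ) + 1 - k) * ξ / (2 * N)) := by
  have hk' : (k : ℝ) ≤ 2 * d := by exact_mod_cast hk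
  push_cast
  have hplus := sinh_scaled_pos hξ hN (a := 2 * d + 1 + k) (by positivity)
  have hminus := sinh_scaled_pos hξ hN (a := 2 * d + 1 - k) (by linarith)
  have hplus_lt := sinh_scaled_lt_sinh_scaled hξ hN (a := 2 * d + 1 + k)
    (a' := 2 * (d + 1) + 1 + k) (by linarith)
  have hminus_lt := sinh_scaled_lt_sinh_scaled hξ hN (a := 2 * d + 1 - k)
    (a' := 2 * (d + 1) + 1 - k) (by linarith)
  gcongr ?_ * ?_
  linarith

lemma exp_mul_f_lt_f_succ (hξ : 0 < ξ) (hN : 0 < N) (b : ℕ) {d l : ℕ} (hl : l ≤ 2 * d) :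
    exp ((2 * b + 1) * (d + 1) * ξ / N) * f ξ b N d l < f ξ b N (d + 1) l := by
  have hexp : exp ((2 * b + 1) * (d + 1) * ξ / N) *
        exp ((2 * (b : ℝ) + 1) * ((d : ℝ) ^ 2 + d) * ξ / (2 * N)) =
      exp ((2 * (b : ℝ) + 1) * (((d + 1 : ℕ) : ℝ) ^ 2 + ((d + 1 : ℕ) : ℝ)) * ξ / (2 * N)) := by
    rw [← exp_add]
    congr 1
    push_cast
    field_simp
    ring
  have hsinh : sinh ((2 * (d : ℝ) + 1) * ξ / (2 * N)) <
      sinh ((2 * ((d + 1 : ℕ) : ℝ) + 1) * ξ / (2 * N)) :=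
    sinh_scaled_lt_sinh_scaled hξ hN (by push_cast; linarith)
  have hprod := prod_le_prod
    (s := Icc 1 l) (fun _ hk => (f_factor_pos hξ hN ((mem_Icc.mp hk).2.trans hl)).le)
    (fun _ hk => f_factor_le_f_factor_succ hξ hN ((mem_Icc.mp hk).2.trans hl))
  unfold f
  rw [← mul_assoc, ← mul_assoc, hexp]
  exact mul_lt_mul (by gcongr) hprod (prod_f_factor_pos hξ hN hl) (by positivity)

end

theorem stmt2 (ξ : ℝ) (hξ : 0 < ξ) (N b : ℕ) (hN : 2 ≤ N) (l : ℕ)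
    (hl : l ≤ 2*(N-2) - 2) :
    Real.exp (ξ/2) < f ξ b N (N-1) l / f ξ b N (N-2) l ∧
    Real.exp (ξ/2) * f ξ b N (N-2) l < f ξ b N (N-1) l := by
  obtain ⟨m, rfl⟩ : ∃ m, N = m + 2 := ⟨N - 2, by omega⟩
  simp only [show m + 2 - 2 = m by omega, show m + 2 - 1 = m + 1 by omega] at hl ⊢
  have hl' : l ≤ 2 * m := by omega
  have hpos := f_pos hξ (by omega : 0 < m + 2) b hl'
  have hexp : exp (ξ / 2) ≤ exp ((2 * b + 1) * (m + 1) * ξ / ((m + 2 : ℕ) : ℝ)) := by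
    refine exp_le_exp.mpr ?_
    rw [div_le_div_iff₀ two_pos (by positivity)]
    push_cast
    have hb : (0 : ℝ) ≤ b := b.cast_nonneg
    have hm : (0 : ℝ) ≤ m := m.cast_nonneg
    nlinarith [mul_nonneg (mul_nonneg hb hm) hξ.le, mul_nonneg hb hξ.le, mul_nonneg hm hξ.le]
  have hlt : exp (ξ / 2) * f ξ b (m + 2) m l < f ξ b (m + 2) (m + 1) l :=
    (mul_le_mul_of_nonneg_right hexp hpos.le).trans_lt
      (exp_mul_f_lt_f_succ hξ (by omega : 0 < m + 2) b hl')
  exact ⟨(lt_div_iff₀ hpos).mpr hlt, hlt⟩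
end
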